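/- Let R be a unital ring and n ≥ 1. The n-th Lie center Z_n(R) = {r ∈ R : [r, x₁, …, x_n]* = 0 for all x_i ∈ R} is a unital subring of R, and moreover is a Lie ideal: r ∈ Z_n(R) implies [r,s] ∈ Z_n(R) for all s ∈ R. -/
import Mathlib


/-- Left-normed commutator: `lnc x [x₂,…,x_k] = [x, x₂, …, x_k]*`. -/
def lnc {R : Type*} [Ring R] (x : R) (l : List R) : R :=
  l.foldl (fun a y => a * y - y * a) x

/-- The n-th Lie center of `R`. -/
def lieCenter (R : Type*) [Ring R] (n : ℕ) : Set R :=
  {r : R | ∀ l : List R, l.length = n → lnc r l = 0}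

lemma lnc_cons {R : Type*} [Ring R] (r y : R) (l : List R) :
    lnc r (y :: l) = lnc (r * y - y * r) l := rfl

lemma lnc_zero {R : Type*} [Ring R] (l : List R) : lnc (0 : R) l = 0 := by
  induction l with
  | nil => rfl
  | cons y l ih =>
      rw [lnc_cons, zero_mul, mul_zero, sub_zero]
      exact ih

lemma lnc_add {R : Type*} [Ring R] (a b : R) (l : List R) :
    lnc (a + b) l = lnc a l + lnc b l := by
  induction l generalizing a b with
  | nil => rfl
  | cons y l ih =>
      rw [lnc_cons, lnc_cons, lnc_cons,
        show (a + b) * y - y * (a + b) = (a * y - y * a) + (b * y - y * b) by noncomm_ring]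
      exact ih _ _

lemma lnc_neg {R : Type*} [Ring R] (a : R) (l : List R) :
    lnc (-a) l = - lnc a l := by
  induction l generalizing a with
  | nil => rfl
  | cons y l ih =>
      rw [lnc_cons, show (-a) * y - y * (-a) = -(a * y - y * a) by noncomm_ring]
      exact ih _

lemma lnc_append {R : Type*} [Ring R] (r : R) (u v : List R) :
    lnc r (u ++ v) = lnc (lnc r u) v := by
  simp [lnc, List.foldl_append]

lemma lnc_eq_zero_of_le {R : Type*} [Ring R] {n : ℕ} {r : R}
    (hr : r ∈ lieCenter R n) {l : List R} (hl : n ≤ l.length) : lnc r l = 0 := by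
  have hr' : ∀ l : List R, l.length = n → lnc r l = 0 := hr
  have htake : (l.take n).length = n := by
    rw [List.length_take]
    omega
  rw [← List.take_append_drop n l, lnc_append, hr' _ htake, lnc_zero]

theorem lieCenter_subring_and_lieIdeal {R : Type*} [Ring R] (n : ℕ) (hn : 1 ≤ n) :
    (∃ S : Subring R, (S : Set R) = lieCenter R n) ∧
      ∀ r ∈ lieCenter R n, ∀ s : R, r * s - s * r ∈ lieCenter R n := by
  have hzero : ∀ l : List R, l.length = n → lnc (0 : R) l = 0 := fun l _ => lnc_zero l
  have hone : ∀ l : List R, l.length = n → lnc (1 : R) l = 0 := by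
    intro l hl
    match l with
    | [] => simp at hl; omega
    | y :: l' =>
        rw [lnc_cons, show (1 : R) * y - y * 1 = 0 by noncomm_ring, lnc_zero]
  have hadd : ∀ a b : R, a ∈ lieCenter R n → b ∈ lieCenter R n →
      ∀ l : List R, l.length = n → lnc (a + b) l = 0 := by
    intro a b ha hb l hl
    have ha' : ∀ l : List R, l.length = n → lnc a l = 0 := ha
    have hb' : ∀ l : List R, l.length = n → lnc b l = 0 := hb
    rw [lnc_add, ha' l hl, hb' l hl, add_zero]
  have hneg : ∀ a : R, a ∈ lieCenter R n →
      ∀ l : List R, l.length = n → lnc (-a) l = 0 := by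
    intro a ha l hl
    have ha' : ∀ l : List R, l.length = n → lnc a l = 0 := ha
    rw [lnc_neg, ha' l hl, neg_zero]
  have hmul : ∀ a b : R, a ∈ lieCenter R n → b ∈ lieCenter R n →
      ∀ l : List R, l.length = n → lnc (a * b) l = 0 := by
    intro a b ha hb l hl
    have ha' : ∀ l : List R, l.length = n → lnc a l = 0 := ha
    have hb' : ∀ l : List R, l.length = n → lnc b l = 0 := hb
    match l with
    | [] => simp at hl; omega
    | y :: l' =>
        have hlen : l'.length + 1 = n := by simpa using hl
        have h1 : lnc a ((b * y) :: l') = 0 := ha' _ (by simpa using hlen)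
        have h2 : lnc b ((y * a) :: l') = 0 := hb' _ (by simpa using hlen)
        rw [lnc_cons] at h1 h2
        rw [lnc_cons,
          show a * b * y - y * (a * b)
              = (a * (b * y) - (b * y) * a) + (b * (y * a) - (y * a) * b) by noncomm_ring,
          lnc_add, h1, h2, add_zero]
  constructor
  · exact ⟨{ carrier := lieCenter R n,
             zero_mem' := hzero,
             one_mem' := hone,
             add_mem' := fun {a b} ha hb => hadd a b ha hb,
             neg_mem' := fun {a} ha => hneg a ha,
             mul_mem' := fun {a b} ha hb => hmul a b ha hb }, rfl⟩
  · intro r hr s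
    intro l hl
    rw [← lnc_cons]
    exact lnc_eq_zero_of_le hr (by simp [hl])
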